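/- arXiv:2105.05001 — 2 statements merged into one kernel-verified Lean document; each statement's English description precedes it below -/
import Mathlib

section
/- Suppose ‖y − y^{(k)}(t)‖₂² ≤ 2(1 + 2η_local·n·K)²·‖y − y(t)‖₂² for all k ∈ [K]. Then with probability at least 1 − n·exp(−mR) over the random initialization, the quantity C₂ := (2η_global·η_local/N)·Σ_{i∈[n]} Σ_{k∈[K]} Σ_{c∈[N]} Σ_{j∈S_c} (y_i − y(t)_i)(y_j − y_c^{(k)}(t)_j)·H(t,k,c)^⊥_{i,j} satisfies C₂ ≤ (16η_global·η_local/N)·K·(1 + 2η_local·n·K)·n·R·‖y − y(t)‖₂². In particular, with that probability ‖H(t,k)^⊥‖_F ≤ 4nR, where H(t,k)^⊥_{i,j} := H(t,k,c)^⊥_{i,j} for j ∈ S_c. -/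
open MeasureTheory ProbabilityTheory Real
open scoped BigOperators ENNReal NNReal ProbabilityTheory

noncomputable section

/-- real indicator of `0 ≤ z` -/
def posInd (z : ℝ) : ℝ := if 0 ≤ z then 1 else 0

/-- real indicator of `z ≤ c` -/
def leInd (z c : ℝ) : ℝ := if z ≤ c then 1 else 0

/-- euclidean inner product -/
def dot {α : Type*} [Fintype α] (u v : α → ℝ) : ℝ := ∑ i, u i * v i

/-- euclidean norm -/
def norm2 {α : Type*} [Fintype α] (v : α → ℝ) : ℝ := Real.sqrt (∑ i, v i ^ 2)

/-- ReLU -/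
def relu (z : ℝ) : ℝ := max z 0

/-- one-hidden-layer ReLU network -/
def fnet {d : ℕ} (m : ℕ) (a : Fin m → ℝ) (u : Fin m → Fin d → ℝ) (x : Fin d → ℝ) : ℝ :=
  (Real.sqrt m)⁻¹ * ∑ r, a r * relu (dot (u r) x)

/-- Frobenius norm -/
def frobG {α β : Type*} [Fintype α] [Fintype β] (M : Matrix α β ℝ) : ℝ :=
  Real.sqrt (∑ p, ∑ q, M p q ^ 2)

/-- minimal Rayleigh quotient (for symmetric `H` this is the least eigenvalue) -/
def eigMin {n : ℕ} (H : Matrix (Fin n) (Fin n) ℝ) : ℝ :=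
  sInf {r : ℝ | ∃ v : Fin n → ℝ, ∑ i, v i ^ 2 = 1 ∧ r = ∑ i, ∑ j, v i * H i j * v j}

/-- maximal Rayleigh quotient (for symmetric `H` this is the largest eigenvalue) -/
def eigMax {n : ℕ} (H : Matrix (Fin n) (Fin n) ℝ) : ℝ :=
  sSup {r : ℝ | ∃ v : Fin n → ℝ, ∑ i, v i ^ 2 = 1 ∧ r = ∑ i, ∑ j, v i * H i j * v j}

/-- condition number -/
def condNum {n : ℕ} (H : Matrix (Fin n) (Fin n) ℝ) : ℝ := eigMax H / eigMin H

/-- asymmetric Gram matrix built from two weight families -/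
def gram2 {d : ℕ} (m n : ℕ) (x : Fin n → Fin d → ℝ)
    (wt wh : Fin m → Fin d → ℝ) : Matrix (Fin n) (Fin n) ℝ :=
  fun i j => (m : ℝ)⁻¹ * dot (x i) (x j) *
    ∑ r, posInd (dot (wt r) (x i)) * posInd (dot (wh r) (x j))

/-- Gram matrix at a single weight family -/
def gram0 {d : ℕ} (m n : ℕ) (x : Fin n → Fin d → ℝ) (u : Fin m → Fin d → ℝ) :
    Matrix (Fin n) (Fin n) ℝ := gram2 m n x u u

/-- standard gaussian `N(0, I_d)` on `ℝ^d` -/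
def stdGaussianPi (d : ℕ) : Measure (Fin d → ℝ) := Measure.pi fun _ => gaussianReal 0 1

/-- i.i.d. family of `m` standard gaussians on `ℝ^d` -/
def iidGaussian (m d : ℕ) : Measure (Fin m → Fin d → ℝ) := Measure.pi fun _ => stdGaussianPi d

/-- gaussian `N(0, σ² I_d)` on `ℝ^d` -/
def scaledGaussianPi (d : ℕ) (σ : ℝ) : Measure (Fin d → ℝ) :=
  Measure.pi fun _ => gaussianReal 0 (Real.toNNReal (σ ^ 2))

/-- i.i.d. family of `m` scaled gaussians on `ℝ^d` -/
def iidScaledGaussian (m d : ℕ) (σ : ℝ) : Measure (Fin m → Fin d → ℝ) :=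
  Measure.pi fun _ => scaledGaussianPi d σ

/-- uniform measure on `{−1, +1}` -/
def pmUniform : Measure ℝ :=
  ((1 : ℝ≥0) / 2) • Measure.dirac (1 : ℝ) + ((1 : ℝ≥0) / 2) • Measure.dirac (-1 : ℝ)

/-- i.i.d. family of `m` uniform signs -/
def iidSign (m : ℕ) : Measure (Fin m → ℝ) := Measure.pi fun _ => pmUniform

/-- NTK matrix `H^∞` -/
def Hinf (d n : ℕ) (x : Fin n → Fin d → ℝ) : Matrix (Fin n) (Fin n) ℝ :=
  fun i j => ∫ w, dot (x i) (x j) * posInd (dot w (x i)) * posInd (dot w (x j)) ∂(stdGaussianPi d)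

open Classical in
/-- the set `Q_i` of neurons whose activation pattern at `xi` is stable under
`R`-perturbations of the initialization -/
def Qset {d : ℕ} (m : ℕ) (R : ℝ) (u0 : Fin m → Fin d → ℝ) (xi : Fin d → ℝ) : Finset (Fin m) :=
  Finset.univ.filter fun r =>
    ∀ w : Fin d → ℝ, norm2 (fun i => w i - u0 r i) ≤ R →
      ((0 ≤ dot w xi) ↔ (0 ≤ dot (u0 r) xi))

/-- the matrix `J` of per-example gradients, one weight family per column -/
def Jmat {d : ℕ} (m n : ℕ) (a : Fin m → ℝ) (x : Fin n → Fin d → ℝ)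
    (W : Fin n → Fin m → Fin d → ℝ) : Matrix (Fin m × Fin d) (Fin n) ℝ :=
  fun p i => (Real.sqrt m)⁻¹ * a p.1 * x i p.2 * posInd (dot (W i p.1) (x i))

lemma norm2_nonneg {α : Type*} [Fintype α] (v : α → ℝ) : 0 ≤ norm2 v := Real.sqrt_nonneg _

lemma sq_norm2 {α : Type*} [Fintype α] (v : α → ℝ) : norm2 v ^ 2 = ∑ i, v i ^ 2 :=
  Real.sq_sqrt (by positivity)

lemma abs_dot_le {α : Type*} [Fintype α] (u v : α → ℝ) : |dot u v| ≤ norm2 u * norm2 v := by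
  have h := Finset.sum_mul_sq_le_sq_mul_sq Finset.univ u v
  have h2 : |dot u v| = Real.sqrt (dot u v ^ 2) := (Real.sqrt_sq_eq_abs _).symm
  rw [h2, norm2, norm2, ← Real.sqrt_mul (by positivity)]
  exact Real.sqrt_le_sqrt h

lemma norm2_const_mul {α : Type*} [Fintype α] (c : ℝ) (v : α → ℝ) :
    norm2 (fun i => c * v i) = |c| * norm2 v := by
  rw [norm2, norm2, ← Real.sqrt_sq_eq_abs, ← Real.sqrt_mul (by positivity)]
  congr 1
  rw [Finset.mul_sum]
  exact Finset.sum_congr rfl fun i _ => by ring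

lemma dot_self_of_norm2_one {α : Type*} [Fintype α] {v : α → ℝ} (h : norm2 v = 1) :
    dot v v = 1 := by
  have h1 : ∑ i, v i ^ 2 = 1 := by
    have h2 : norm2 v ^ 2 = 1 := by rw [h]; norm_num
    rw [sq_norm2] at h2; exact h2
  rw [dot]
  rw [← h1]
  exact Finset.sum_congr rfl fun i _ => (sq (v i)).symm ▸ by ring


lemma mem_Qset_compl_iff {d m : ℕ} {R : ℝ} (hR : 0 < R) {u0 : Fin m → Fin d → ℝ}
    {xi : Fin d → ℝ} (hx : norm2 xi = 1) (r : Fin m) :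
    r ∈ (Qset m R u0 xi)ᶜ ↔ dot (u0 r) xi ∈ Set.Ico (-R) R := by
  classical
  have hxx : dot xi xi = 1 := dot_self_of_norm2_one hx
  rw [Finset.mem_compl, Qset, Finset.mem_filter]
  simp only [Finset.mem_univ, true_and]
  have hdotw : ∀ c : ℝ, dot (fun i => u0 r i - c * xi i) xi = dot (u0 r) xi - c := by
    intro c
    have : dot (fun i => u0 r i - c * xi i) xi = dot (u0 r) xi - c * dot xi xi := by
      simp only [dot, Finset.mul_sum, ← Finset.sum_sub_distrib]
      exact Finset.sum_congr rfl fun i _ => by ring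
    rw [this, hxx, mul_one]
  have hnw : ∀ c : ℝ, norm2 (fun i => (u0 r i - c * xi i) - u0 r i) = |c| := by
    intro c
    have : (fun i => (u0 r i - c * xi i) - u0 r i) = fun i => (-c) * xi i := by ext i; ring
    rw [this, norm2_const_mul, hx, mul_one, abs_neg]
  constructor
  · intro h
    by_contra hc
    simp only [Set.mem_Ico, not_and_or, not_le, not_lt] at hc
    apply h
    intro w hw
    have hdiff : |dot (fun i => w i - u0 r i) xi| ≤ R := by
      have := abs_dot_le (fun i => w i - u0 r i) xi
      rw [hx, mul_one] at this
      exact this.trans hw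
    have hsplit : dot w xi = dot (u0 r) xi + dot (fun i => w i - u0 r i) xi := by
      simp only [dot, ← Finset.sum_add_distrib]
      exact Finset.sum_congr rfl fun i _ => by ring
    have habs := abs_le.mp hdiff
    rcases hc with hc | hc
    · constructor <;> intro hh
      · exfalso; rw [hsplit] at hh; linarith
      · exfalso; linarith
    · have h0 : 0 ≤ dot (u0 r) xi := le_trans hR.le hc
      exact ⟨fun _ => h0, fun _ => by rw [hsplit]; linarith⟩
  · rintro ⟨h1, h2⟩ hall
    rcases le_or_gt 0 (dot (u0 r) xi) with h0 | h0
    · have := hall (fun i => u0 r i - R * xi i) (by rw [hnw]; rw [abs_of_pos hR])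
      rw [hdotw] at this
      have := this.mpr h0
      linarith
    · have := hall (fun i => u0 r i - (dot (u0 r) xi) * xi i)
        (by rw [hnw]; rw [abs_of_neg h0]; linarith)
      rw [hdotw, sub_self] at this
      have := this.mp le_rfl
      linarith

lemma pdf_conv_identity (v1 v2 : ℝ≥0) (h1 : v1 ≠ 0) (h2 : v2 ≠ 0) (z y : ℝ) :
    gaussianPDFReal 0 v1 (z - y) * gaussianPDFReal 0 v2 y =
      gaussianPDFReal 0 (v1 + v2) z *
        gaussianPDFReal ((v2 : ℝ) * z / ((v1 : ℝ) + v2)) (v1 * v2 / (v1 + v2)) y := by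
  have ha : (0:ℝ) < v1 := lt_of_le_of_ne (v1.coe_nonneg) (by exact_mod_cast (Ne.symm h1))
  have hb : (0:ℝ) < v2 := lt_of_le_of_ne (v2.coe_nonneg) (by exact_mod_cast (Ne.symm h2))
  have hab : (0:ℝ) < (v1:ℝ) + v2 := by linarith
  have hc : ((v1 * v2 / (v1 + v2) : ℝ≥0) : ℝ) = (v1:ℝ) * v2 / ((v1:ℝ) + v2) := by push_cast; ring
  unfold gaussianPDFReal
  rw [hc]
  push_cast
  set a := (v1:ℝ); set b := (v2:ℝ)
  have hconst : (√(2 * π * a))⁻¹ * (√(2 * π * b))⁻¹ =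
      (√(2 * π * (a + b)))⁻¹ * (√(2 * π * (a * b / (a + b))))⁻¹ := by
    rw [← mul_inv, ← mul_inv, ← Real.sqrt_mul (by positivity), ← Real.sqrt_mul (by positivity)]
    congr 2
    field_simp
  have hexp : rexp (-(z - y - 0) ^ 2 / (2 * a)) * rexp (-(y - 0) ^ 2 / (2 * b)) =
      rexp (-(z - 0) ^ 2 / (2 * (a + b))) * rexp (-(y - b * z / (a + b)) ^ 2 / (2 * (a * b / (a + b)))) := by
    rw [← Real.exp_add, ← Real.exp_add]
    congr 1
    field_simp
    ring
  calc (√(2 * π * a))⁻¹ * rexp (-(z - y - 0) ^ 2 / (2 * a)) *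
        ((√(2 * π * b))⁻¹ * rexp (-(y - 0) ^ 2 / (2 * b)))
      = ((√(2 * π * a))⁻¹ * (√(2 * π * b))⁻¹) *
        (rexp (-(z - y - 0) ^ 2 / (2 * a)) * rexp (-(y - 0) ^ 2 / (2 * b))) := by ring
    _ = ((√(2 * π * (a + b)))⁻¹ * (√(2 * π * (a * b / (a + b))))⁻¹) *
        (rexp (-(z - 0) ^ 2 / (2 * (a + b))) * rexp (-(y - b * z / (a + b)) ^ 2 / (2 * (a * b / (a + b))))) := by
        rw [hconst, hexp]
    _ = _ := by ring

lemma gaussianReal_conv (v1 v2 : ℝ≥0) :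
    Measure.map (fun p : ℝ × ℝ => p.1 + p.2) ((gaussianReal 0 v1).prod (gaussianReal 0 v2)) =
      gaussianReal 0 (v1 + v2) := by
  rcases eq_or_ne v1 0 with rfl | h1
  · rw [gaussianReal_zero_var, Measure.dirac_prod, Measure.map_map measurable_add (measurable_prodMk_left), zero_add]
    have : ((fun p : ℝ × ℝ => p.1 + p.2) ∘ Prod.mk (0:ℝ)) = id := by ext x; simp
    rw [this, Measure.map_id]
  rcases eq_or_ne v2 0 with rfl | h2
  · rw [gaussianReal_zero_var, Measure.prod_dirac,
      Measure.map_map measurable_add (measurable_prodMk_right), add_zero]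
    have : ((fun p : ℝ × ℝ => p.1 + p.2) ∘ (fun x : ℝ => (x, (0:ℝ)))) = id := by ext x; simp
    rw [this, Measure.map_id]
  -- main case
  have h12 : v1 + v2 ≠ 0 := by simp [h1]
  have hq : v1 * v2 / (v1 + v2) ≠ 0 := by
    simp only [ne_eq, div_eq_zero_iff, mul_eq_zero]
    push_neg
    exact ⟨⟨h1, h2⟩, h12⟩
  set f : ℝ → ℝ≥0∞ := gaussianPDF 0 v1 with hf
  set g : ℝ → ℝ≥0∞ := gaussianPDF 0 v2 with hg
  have hfm : Measurable f := measurable_gaussianPDF _ _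
  have hgm : Measurable g := measurable_gaussianPDF _ _
  refine Measure.ext fun s hs => ?_
  rw [Measure.map_apply measurable_add hs]
  set I : ℝ → ℝ≥0∞ := s.indicator 1 with hI
  have hIm : Measurable I := measurable_one.indicator hs
  have hA : MeasurableSet ((fun p : ℝ × ℝ => p.1 + p.2) ⁻¹' s) := measurable_add hs
  rw [gaussianReal_of_var_ne_zero 0 h1, gaussianReal_of_var_ne_zero 0 h2,
    Measure.prod_apply hA]
  have step1 : ∀ x : ℝ, (volume.withDensity g) (Prod.mk x ⁻¹' ((fun p : ℝ × ℝ => p.1 + p.2) ⁻¹' s))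
      = ∫⁻ y, I (x + y) * g y := by
    intro x
    have hBx : MeasurableSet {y : ℝ | x + y ∈ s} := (measurable_const_add x) hs
    rw [show (Prod.mk x ⁻¹' ((fun p : ℝ × ℝ => p.1 + p.2) ⁻¹' s)) = {y : ℝ | x + y ∈ s} from rfl,
      withDensity_apply _ hBx, ← lintegral_indicator hBx]
    congr 1
    ext y
    by_cases hy : x + y ∈ s
    · simp [Set.indicator, hy, hI]
    · simp [Set.indicator, hy, hI]
  rw [lintegral_congr step1]
  have hmix : Measurable (Function.uncurry fun x y => I (x + y) * g y) := by
    apply Measurable.mul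
    · exact hIm.comp measurable_add
    · exact hgm.comp measurable_snd
  have hF : Measurable fun x => ∫⁻ y, I (x + y) * g y := hmix.lintegral_prod_right
  rw [lintegral_withDensity_eq_lintegral_mul _ hfm hF]
  simp only [Pi.mul_apply]
  have step2 : ∀ x : ℝ, f x * ∫⁻ y, I (x + y) * g y = ∫⁻ y, f x * (I (x + y) * g y) := by
    intro x
    rw [lintegral_const_mul _ (by exact (hIm.comp (measurable_const_add x)).mul hgm)]
  rw [lintegral_congr step2]
  have hmix2 : Measurable (Function.uncurry fun x y => f x * (I (x + y) * g y)) := by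
    apply Measurable.mul
    · exact hfm.comp measurable_fst
    · exact (hIm.comp measurable_add).mul (hgm.comp measurable_snd)
  rw [lintegral_lintegral_swap hmix2.aemeasurable]
  have step3 : ∀ y : ℝ, ∫⁻ x, f x * (I (x + y) * g y) = ∫⁻ z, f (z - y) * (I z * g y) := by
    intro y
    have := lintegral_add_right_eq_self (μ := (volume : Measure ℝ))
      (fun z => f (z - y) * (I z * g y)) y
    rw [← this]
    congr 1
    ext x
    simp [add_sub_cancel_right]
  rw [lintegral_congr step3]
  have hmix3 : Measurable (Function.uncurry fun y z => f (z - y) * (I z * g y)) := by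
    apply Measurable.mul
    · exact hfm.comp (measurable_snd.sub measurable_fst)
    · exact (hIm.comp measurable_snd).mul (hgm.comp measurable_fst)
  rw [lintegral_lintegral_swap hmix3.aemeasurable]
  have step4 : ∀ z : ℝ, ∫⁻ y, f (z - y) * (I z * g y) = I z * ∫⁻ y, f (z - y) * g y := by
    intro y
    rw [← lintegral_const_mul _ (by exact (hfm.comp (measurable_const.sub measurable_id)).mul hgm)]
    congr 1; ext x; ring
  rw [lintegral_congr step4]
  have step5 : ∀ z : ℝ, ∫⁻ y, f (z - y) * g y = gaussianPDF 0 (v1 + v2) z := by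
    intro z
    have heach : ∀ y : ℝ, f (z - y) * g y =
        ENNReal.ofReal (gaussianPDFReal 0 (v1 + v2) z) *
          gaussianPDF ((v2 : ℝ) * z / ((v1 : ℝ) + v2)) (v1 * v2 / (v1 + v2)) y := by
      intro y
      rw [hf, hg, gaussianPDF, gaussianPDF, gaussianPDF,
        ← ENNReal.ofReal_mul (gaussianPDFReal_nonneg _ _ _),
        ← ENNReal.ofReal_mul (gaussianPDFReal_nonneg _ _ _),
        pdf_conv_identity v1 v2 h1 h2 z y]
    rw [lintegral_congr heach, lintegral_const_mul _ (measurable_gaussianPDF _ _),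
      lintegral_gaussianPDF_eq_one _ hq, mul_one, gaussianPDF]
  rw [lintegral_congr (fun z => by rw [step5 z]),
    gaussianReal_of_var_ne_zero 0 h12, withDensity_apply _ hs, ← lintegral_indicator hs]
  congr 1
  ext z
  by_cases hz : z ∈ s
  · simp [Set.indicator, hz, hI]
  · simp [Set.indicator, hz, hI]

lemma gaussian_dot_law : ∀ (e : ℕ) (x : Fin e → ℝ),
    Measure.map (fun v : Fin e → ℝ => ∑ j, x j * v j)
        (Measure.pi fun _ => gaussianReal 0 1) =
      gaussianReal 0 (Real.toNNReal (∑ j, x j ^ 2)) := by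
  intro e
  induction e with
  | zero =>
    intro x
    have : (fun v : Fin 0 → ℝ => ∑ j, x j * v j) = fun _ => (0:ℝ) := by
      ext v; simp
    rw [this, Measure.map_const]
    have : (Measure.pi fun _ : Fin 0 => gaussianReal 0 1) Set.univ = 1 := measure_univ
    rw [this, one_smul]
    simp [gaussianReal_zero_var]
  | succ e ih =>
    intro x
    set ν := gaussianReal (0:ℝ) (1:ℝ≥0) with hν
    have hmf1 : Measurable (fun a : ℝ => x 0 * a) := measurable_const_mul _
    have hmf2 : Measurable (fun w : Fin e → ℝ => ∑ j, x j.succ * w j) :=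
      Finset.measurable_sum _ fun j _ => (measurable_pi_apply j).const_mul _
    have hG : Measurable (fun p : ℝ × (Fin e → ℝ) => x 0 * p.1 + ∑ j, x j.succ * p.2 j) :=
      (hmf1.comp measurable_fst).add (hmf2.comp measurable_snd)
    have mp := measurePreserving_piFinSuccAbove (fun _ : Fin (e+1) => ν) 0
    have hFeq : (fun v : Fin (e+1) → ℝ => ∑ j, x j * v j) =
        (fun p : ℝ × (Fin e → ℝ) => x 0 * p.1 + ∑ j, x j.succ * p.2 j) ∘
          (MeasurableEquiv.piFinSuccAbove (fun _ => ℝ) 0) := by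
      ext v
      simp only [Function.comp_apply, MeasurableEquiv.piFinSuccAbove_apply]
      rw [Fin.sum_univ_succ]
      simp [Fin.insertNthEquiv, Fin.succAbove_zero, Fin.tail]
    rw [hFeq, ← Measure.map_map hG (MeasurableEquiv.measurable _), mp.map_eq]
    have hGdecomp : (fun p : ℝ × (Fin e → ℝ) => x 0 * p.1 + ∑ j, x j.succ * p.2 j) =
        (fun p : ℝ × ℝ => p.1 + p.2) ∘
          Prod.map (fun a : ℝ => x 0 * a) (fun w : Fin e → ℝ => ∑ j, x j.succ * w j) := by
      ext p; rfl
    rw [hGdecomp, ← Measure.map_map measurable_add (hmf1.prodMap hmf2),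
      ← Measure.map_prod_map _ _ hmf1 hmf2]
    have hlaw1 : Measure.map (fun a : ℝ => x 0 * a) ν =
        gaussianReal 0 (Real.toNNReal (x 0 ^ 2)) := by
      rw [hν, gaussianReal_map_const_mul (x 0), mul_zero, mul_one]
      congr 1
      ext
      simp [Real.coe_toNNReal _ (sq_nonneg (x 0))]
    rw [hlaw1, ih (fun j => x j.succ), gaussianReal_conv]
    congr 1
    rw [← Real.toNNReal_add (sq_nonneg _) (by positivity), Fin.sum_univ_succ]

lemma lintegral_pi_prod {E : Type*} [MeasurableSpace E] (μ : Measure E) [IsProbabilityMeasure μ]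
    (g : E → ℝ≥0∞) (hg : Measurable g) : ∀ m : ℕ,
    ∫⁻ U : Fin m → E, ∏ r, g (U r) ∂(Measure.pi fun _ => μ) = (∫⁻ x, g x ∂μ) ^ m := by
  intro m
  induction m with
  | zero => simp
  | succ m ih =>
    have mp := measurePreserving_piFinSuccAbove (fun _ : Fin (m+1) => μ) 0
    have key := MeasurePreserving.lintegral_map_equiv
      (fun p : E × (Fin m → E) => g p.1 * ∏ r, g (p.2 r))
      (MeasurableEquiv.piFinSuccAbove (fun _ => E) 0) mp
    have heq : ∀ U : Fin (m+1) → E,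
        g ((MeasurableEquiv.piFinSuccAbove (fun _ => E) 0) U).1 *
          ∏ r, g (((MeasurableEquiv.piFinSuccAbove (fun _ => E) 0) U).2 r) =
        ∏ r, g (U r) := by
      intro U
      rw [Fin.prod_univ_succ]
      congr 1
    calc ∫⁻ U : Fin (m+1) → E, ∏ r, g (U r) ∂(Measure.pi fun _ => μ)
        = ∫⁻ p : E × (Fin m → E), g p.1 * ∏ r, g (p.2 r)
            ∂(μ.prod (Measure.pi fun _ : Fin m => μ)) := by
          rw [key]
          exact lintegral_congr fun U => (heq U).symm
      _ = (∫⁻ x, g x ∂μ) * ∫⁻ w : Fin m → E, ∏ r, g (w r) ∂(Measure.pi fun _ => μ) := by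
          exact lintegral_prod_mul (f := g) (g := fun w : Fin m → E => ∏ r, g (w r))
            hg.aemeasurable (Finset.measurable_prod Finset.univ fun r _ =>
              hg.comp (measurable_pi_apply r)).aemeasurable
      _ = (∫⁻ x, g x ∂μ) ^ (m + 1) := by rw [ih]; ring

lemma gaussianReal_Ico_le (R : ℝ) (hR : 0 < R) :
    gaussianReal 0 1 (Set.Ico (-R) R) ≤ ENNReal.ofReal R := by
  rw [gaussianReal_of_var_ne_zero 0 one_ne_zero, withDensity_apply _ measurableSet_Ico]
  have hc : (0:ℝ) < Real.sqrt (2 * π) := Real.sqrt_pos.mpr (by positivity)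
  have hb : ∀ x : ℝ, gaussianPDF 0 1 x ≤ ENNReal.ofReal ((Real.sqrt (2 * π))⁻¹) := by
    intro x
    rw [gaussianPDF]
    apply ENNReal.ofReal_le_ofReal
    rw [gaussianPDFReal]
    have h1 : rexp (-(x - 0) ^ 2 / (2 * ((1:ℝ≥0):ℝ))) ≤ 1 := by
      rw [Real.exp_le_one_iff]
      push_cast
      nlinarith [sq_nonneg (x - 0)]
    calc (√(2 * π * ((1:ℝ≥0):ℝ)))⁻¹ * rexp (-(x - 0) ^ 2 / (2 * ((1:ℝ≥0):ℝ)))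
        ≤ (√(2 * π * ((1:ℝ≥0):ℝ)))⁻¹ * 1 := by
          apply mul_le_mul_of_nonneg_left h1
          positivity
      _ = (√(2 * π))⁻¹ := by push_cast; rw [mul_one, mul_one]
  calc ∫⁻ x in Set.Ico (-R) R, gaussianPDF 0 1 x
      ≤ ∫⁻ _ in Set.Ico (-R) R, ENNReal.ofReal ((Real.sqrt (2 * π))⁻¹) :=
        setLIntegral_mono measurable_const fun x _ => hb x
    _ = ENNReal.ofReal ((Real.sqrt (2 * π))⁻¹) * volume (Set.Ico (-R) R) := by
        rw [setLIntegral_const]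
    _ = ENNReal.ofReal ((Real.sqrt (2 * π))⁻¹ * (2 * R)) := by
        rw [Real.volume_Ico, ← ENNReal.ofReal_mul (by positivity : (0:ℝ) ≤ (Real.sqrt (2 * π))⁻¹)]
        congr 1
        ring
    _ ≤ ENNReal.ofReal R := by
        apply ENNReal.ofReal_le_ofReal
        have h2 : (2:ℝ) ≤ Real.sqrt (2 * π) := by
          nlinarith [Real.sq_sqrt (show (0:ℝ) ≤ 2*π by positivity),
            Real.sqrt_nonneg (2*π), Real.pi_gt_three]
        rw [inv_mul_le_iff₀ hc]
        nlinarith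

lemma measurable_dot_xi {d : ℕ} (xi : Fin d → ℝ) : Measurable (fun v : Fin d → ℝ => dot v xi) :=
  Finset.measurable_sum _ fun j _ => (measurable_pi_apply j).mul_const _

lemma gaussian_slab_le {d : ℕ} (R : ℝ) (hR : 0 < R) (xi : Fin d → ℝ)
    (hx : ∑ j, xi j ^ 2 = 1) :
    (Measure.pi fun _ : Fin d => gaussianReal 0 1) {v | dot v xi ∈ Set.Ico (-R) R}
      ≤ ENNReal.ofReal R := by
  have hmeq : (fun v : Fin d → ℝ => dot v xi) = fun v => ∑ j, xi j * v j := by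
    ext v; exact Finset.sum_congr rfl fun j _ => mul_comm _ _
  have hset : {v : Fin d → ℝ | dot v xi ∈ Set.Ico (-R) R} =
      (fun v : Fin d → ℝ => ∑ j, xi j * v j) ⁻¹' (Set.Ico (-R) R) := by
    rw [← hmeq]; rfl
  rw [hset, ← Measure.map_apply (by rw [← hmeq]; exact measurable_dot_xi xi) measurableSet_Ico,
    gaussian_dot_law d xi, hx]
  simpa using gaussianReal_Ico_le R hR

lemma chernoff_bound {d : ℕ} (m : ℕ) (R : ℝ) (hR : 0 < R) (xi : Fin d → ℝ)
    (hx : ∑ j, xi j ^ 2 = 1) :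
    (Measure.pi fun _ : Fin m => (Measure.pi fun _ : Fin d => gaussianReal 0 1))
        {U | 4 * m * R ≤ ∑ r, (if dot (U r) xi ∈ Set.Ico (-R) R then (1:ℝ) else 0)}
      ≤ ENNReal.ofReal (Real.exp (-((m:ℝ) * R))) := by
  set μ0 := (Measure.pi fun _ : Fin d => gaussianReal 0 1) with hμ0
  set A := {v : Fin d → ℝ | dot v xi ∈ Set.Ico (-R) R} with hAdef
  have hAm : MeasurableSet A := (measurable_dot_xi xi) measurableSet_Ico
  set g : (Fin d → ℝ) → ℝ≥0∞ :=
    fun v => if dot v xi ∈ Set.Ico (-R) R then ENNReal.ofReal (rexp 1) else 1 with hgdef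
  have hgm : Measurable g := Measurable.ite hAm measurable_const measurable_const
  have hprod : ∀ U : Fin m → Fin d → ℝ,
      ∏ r, g (U r) = ENNReal.ofReal
        (rexp (∑ r, (if dot (U r) xi ∈ Set.Ico (-R) R then (1:ℝ) else 0))) := by
    intro U
    rw [Real.exp_sum, ENNReal.ofReal_prod_of_nonneg (fun r _ => (Real.exp_pos _).le)]
    apply Finset.prod_congr rfl
    intro r _
    by_cases h : dot (U r) xi ∈ Set.Ico (-R) R
    · have hg1 : g (U r) = ENNReal.ofReal (rexp 1) := if_pos h
      rw [hg1, if_pos h]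
    · have hg1 : g (U r) = 1 := if_neg h
      rw [hg1, if_neg h, Real.exp_zero, ENNReal.ofReal_one]
  have hsub : {U : Fin m → Fin d → ℝ |
        4 * m * R ≤ ∑ r, (if dot (U r) xi ∈ Set.Ico (-R) R then (1:ℝ) else 0)} ⊆
      {U | ENNReal.ofReal (rexp (4 * m * R)) ≤ ∏ r, g (U r)} := by
    intro U hU
    simp only [Set.mem_setOf_eq] at hU ⊢
    rw [hprod U]
    exact ENNReal.ofReal_le_ofReal (Real.exp_le_exp.mpr hU)
  have hmeas_prod : Measurable fun U : Fin m → Fin d → ℝ => ∏ r, g (U r) :=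
    Finset.measurable_prod _ fun r _ => hgm.comp (measurable_pi_apply r)
  have hmarkov := mul_meas_ge_le_lintegral₀ (μ := Measure.pi fun _ : Fin m => μ0)
    hmeas_prod.aemeasurable (ENNReal.ofReal (rexp (4 * m * R)))
  rw [lintegral_pi_prod μ0 g hgm m] at hmarkov
  -- bound ∫⁻ g
  have hp : μ0 A ≤ ENNReal.ofReal R := gaussian_slab_le R hR xi hx
  set p := (μ0 A).toReal with hpdef
  have hpfin : μ0 A ≠ ∞ := measure_ne_top _ _
  have hpeq : μ0 A = ENNReal.ofReal p := (ENNReal.ofReal_toReal hpfin).symm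
  have hp0 : 0 ≤ p := ENNReal.toReal_nonneg
  have hp1 : p ≤ 1 := by
    rw [hpdef]
    apply ENNReal.toReal_le_of_le_ofReal zero_le_one
    rw [ENNReal.ofReal_one]
    exact prob_le_one
  have hpR : p ≤ R := ENNReal.toReal_le_of_le_ofReal hR.le hp
  have hgsum : ∀ v, g v = A.indicator (fun _ => ENNReal.ofReal (rexp 1)) v +
      Aᶜ.indicator (fun _ => (1:ℝ≥0∞)) v := by
    intro v
    by_cases h : dot v xi ∈ Set.Ico (-R) R
    · have hv : v ∈ A := h
      have hg1 : g v = ENNReal.ofReal (rexp 1) := if_pos h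
      rw [hg1, Set.indicator_of_mem hv, Set.indicator_of_notMem (by simpa using hv), add_zero]
    · have hv : v ∉ A := h
      have hg1 : g v = 1 := if_neg h
      rw [hg1, Set.indicator_of_notMem hv, Set.indicator_of_mem (Set.mem_compl hv), zero_add]
  have hint : ∫⁻ v, g v ∂μ0 ≤ ENNReal.ofReal (rexp (3 * R)) := by
    have : ∫⁻ v, g v ∂μ0 = ENNReal.ofReal (rexp 1) * μ0 A + μ0 Aᶜ := by
      rw [lintegral_congr hgsum,
        lintegral_add_left (measurable_const.indicator hAm),
        lintegral_indicator hAm, lintegral_indicator hAm.compl,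
        setLIntegral_const, setLIntegral_const, one_mul]
    rw [this, prob_compl_eq_one_sub hAm, hpeq]
    have h1sub : (1 : ℝ≥0∞) - ENNReal.ofReal p = ENNReal.ofReal (1 - p) := by
      rw [ENNReal.ofReal_sub _ hp0, ENNReal.ofReal_one]
    rw [h1sub, ← ENNReal.ofReal_mul (Real.exp_pos _).le,
      ← ENNReal.ofReal_add (by positivity) (by linarith)]
    apply ENNReal.ofReal_le_ofReal
    nlinarith [Real.add_one_le_exp (3 * R), Real.exp_one_lt_d9, Real.exp_pos 1]
  -- combine
  have hb : ENNReal.ofReal (rexp (4 * m * R)) *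
      (Measure.pi fun _ : Fin m => μ0)
        {U | 4 * m * R ≤ ∑ r, (if dot (U r) xi ∈ Set.Ico (-R) R then (1:ℝ) else 0)}
      ≤ ENNReal.ofReal (rexp (4 * m * R)) *
        (Measure.pi fun _ : Fin m => μ0)
          {U | ENNReal.ofReal (rexp (4 * m * R)) ≤ ∏ r, g (U r)} :=
    mul_le_mul_right (measure_mono hsub) _
  have hc : (∫⁻ x, g x ∂μ0) ^ m ≤ ENNReal.ofReal (rexp (4 * m * R + -((m:ℝ) * R))) := by
    calc (∫⁻ x, g x ∂μ0) ^ m ≤ ENNReal.ofReal (rexp (3 * R)) ^ m := pow_le_pow_left' hint m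
      _ = ENNReal.ofReal (rexp (3 * R) ^ m) := by
          rw [ENNReal.ofReal_pow (Real.exp_pos _).le]
      _ = ENNReal.ofReal (rexp (3 * R * m)) := by
          rw [mul_comm (3*R) (m:ℝ), Real.exp_nat_mul]
      _ ≤ ENNReal.ofReal (rexp (4 * m * R + -((m:ℝ) * R))) := by
          apply ENNReal.ofReal_le_ofReal
          apply Real.exp_le_exp.mpr
          nlinarith [hR, Nat.cast_nonneg (α := ℝ) m]
  have hfinal := le_trans (le_trans hb hmarkov) hc
  rw [show (4:ℝ) * m * R + -((m:ℝ) * R) = 4 * m * R + -(m * R) from rfl,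
    Real.exp_add, ENNReal.ofReal_mul (Real.exp_pos _).le] at hfinal
  calc (Measure.pi fun _ : Fin m => μ0)
        {U | 4 * m * R ≤ ∑ r, (if dot (U r) xi ∈ Set.Ico (-R) R then (1:ℝ) else 0)}
      = 1 * (Measure.pi fun _ : Fin m => μ0)
          {U | 4 * m * R ≤ ∑ r, (if dot (U r) xi ∈ Set.Ico (-R) R then (1:ℝ) else 0)} := by
        rw [one_mul]
    _ ≤ ENNReal.ofReal (rexp (-((m:ℝ) * R))) := by
        rw [← ENNReal.mul_le_mul_iff_right (a := ENNReal.ofReal (rexp (4 * m * R)))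
          (by simp [Real.exp_pos]) ENNReal.ofReal_ne_top, ← mul_assoc]
        calc ENNReal.ofReal (rexp (4 * m * R)) * 1 *
              (Measure.pi fun _ : Fin m => μ0)
                {U | 4 * m * R ≤ ∑ r, (if dot (U r) xi ∈ Set.Ico (-R) R then (1:ℝ) else 0)}
            = ENNReal.ofReal (rexp (4 * m * R)) *
              (Measure.pi fun _ : Fin m => μ0)
                {U | 4 * m * R ≤ ∑ r, (if dot (U r) xi ∈ Set.Ico (-R) R then (1:ℝ) else 0)} := by
              rw [mul_one]
          _ ≤ ENNReal.ofReal (rexp (4 * m * R)) * ENNReal.ofReal (rexp (-((m:ℝ) * R))) := hfinal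

lemma posInd_nonneg (z : ℝ) : 0 ≤ posInd z := by unfold posInd; split <;> norm_num
lemma posInd_le_one (z : ℝ) : posInd z ≤ 1 := by unfold posInd; split <;> norm_num

lemma sum_abs_le_sqrt_card {n : ℕ} (v : Fin n → ℝ) :
    ∑ i, |v i| ≤ Real.sqrt n * norm2 v := by
  have h := Finset.sum_mul_sq_le_sq_mul_sq Finset.univ (fun i => |v i|) (fun _ => (1:ℝ))
  simp only [mul_one, one_pow, sq_abs, Finset.sum_const, Finset.card_univ, Fintype.card_fin,
    nsmul_eq_mul, mul_one] at h
  have h2 : ∑ i, |v i| = Real.sqrt ((∑ i, |v i|) ^ 2) := (Real.sqrt_sq (by positivity)).symm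
  rw [h2]
  calc Real.sqrt ((∑ i, |v i|) ^ 2) ≤ Real.sqrt ((∑ i, v i ^ 2) * n) := Real.sqrt_le_sqrt h
    _ = Real.sqrt n * norm2 v := by
        rw [Real.sqrt_mul (by positivity), norm2]; ring

/-- generic entry bound -/
lemma entry_abs_le {d m : ℕ} (hm : 0 < m) {R : ℝ} (hR : 0 < R)
    {Q : Finset (Fin m)} (hcard : (Q.card : ℝ) ≤ 4 * m * R)
    {xi xj : Fin d → ℝ} (hxi : norm2 xi = 1) (hxj : norm2 xj = 1)
    (ut wk : Fin m → Fin d → ℝ) :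
    |(m : ℝ)⁻¹ * dot xi xj * ∑ r ∈ Q, posInd (dot (ut r) xi) * posInd (dot (wk r) xj)| ≤
      4 * R := by
  have hm' : (0:ℝ) < m := by exact_mod_cast hm
  have hS0 : 0 ≤ ∑ r ∈ Q, posInd (dot (ut r) xi) * posInd (dot (wk r) xj) :=
    Finset.sum_nonneg fun r _ => mul_nonneg (posInd_nonneg _) (posInd_nonneg _)
  have hS1 : ∑ r ∈ Q, posInd (dot (ut r) xi) * posInd (dot (wk r) xj) ≤ Q.card := by
    calc ∑ r ∈ Q, posInd (dot (ut r) xi) * posInd (dot (wk r) xj)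
        ≤ ∑ _r ∈ Q, (1:ℝ) := Finset.sum_le_sum fun r _ =>
          mul_le_one₀ (posInd_le_one _) (posInd_nonneg _) (posInd_le_one _)
      _ = Q.card := by simp
  have hd : |dot xi xj| ≤ 1 := by
    have := abs_dot_le xi xj; rwa [hxi, hxj, mul_one] at this
  rw [abs_mul, abs_mul, abs_of_nonneg (by positivity : (0:ℝ) ≤ (m:ℝ)⁻¹),
    abs_of_nonneg hS0]
  calc (m:ℝ)⁻¹ * |dot xi xj| * (∑ r ∈ Q, posInd (dot (ut r) xi) * posInd (dot (wk r) xj))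
      ≤ (m:ℝ)⁻¹ * 1 * (4 * m * R) := by
        apply mul_le_mul (mul_le_mul_of_nonneg_left hd (by positivity)) (hS1.trans hcard) hS0
        positivity
    _ = 4 * R := by field_simp

theorem deterministic_part
    (d m n N K : ℕ) (hm : 0 < m)
    (R ηl ηg : ℝ) (hR : 0 < R) (hηl : 0 ≤ ηl) (hηg : 0 ≤ ηg)
    (x : Fin n → Fin d → ℝ) (hx : ∀ i, norm2 (x i) = 1) (y : Fin n → ℝ)
    (S : Fin n → Fin N)
    (a : Fin m → ℝ) (u0 ut : Fin m → Fin d → ℝ) (w : ℕ → Fin N → Fin m → Fin d → ℝ)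
    (herr : ∀ k ∈ Finset.Icc 1 K,
      norm2 (fun i => y i - fnet m a (w k (S i)) (x i)) ^ 2 ≤
        2 * (1 + 2 * ηl * n * K) ^ 2 * norm2 (fun i => y i - fnet m a ut (x i)) ^ 2)
    (hcard : ∀ i, (((Qset m R u0 (x i))ᶜ).card : ℝ) ≤ 4 * m * R) :
    (2 * ηg * ηl / N *
        ∑ i : Fin n, ∑ k ∈ Finset.Icc 1 K, ∑ c : Fin N,
          ∑ j ∈ Finset.univ.filter (fun j => S j = c),
            (y i - fnet m a ut (x i)) *
              (y j - fnet m a (w k c) (x j)) *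
                ((m : ℝ)⁻¹ * dot (x i) (x j) *
                  ∑ r ∈ (Qset m R u0 (x i))ᶜ,
                    posInd (dot (ut r) (x i)) * posInd (dot (w k c r) (x j))) ≤
      16 * ηg * ηl / N * K * (1 + 2 * ηl * n * K) * n * R *
        norm2 (fun i => y i - fnet m a ut (x i)) ^ 2) ∧
    ∀ k ∈ Finset.Icc 1 K,
      frobG (fun i j : Fin n =>
          (m : ℝ)⁻¹ * dot (x i) (x j) *
            ∑ r ∈ (Qset m R u0 (x i))ᶜ,
              posInd (dot (ut r) (x i)) * posInd (dot (w k (S j) r) (x j))) ≤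
        4 * n * R := by
  have hHbound : ∀ (i j : Fin n) (wk : Fin m → Fin d → ℝ),
      |(m : ℝ)⁻¹ * dot (x i) (x j) *
        ∑ r ∈ (Qset m R u0 (x i))ᶜ,
          posInd (dot (ut r) (x i)) * posInd (dot (wk r) (x j))| ≤ 4 * R :=
    fun i j wk => entry_abs_le hm hR (hcard i) (hx i) (hx j) ut wk
  constructor
  · -- C₂ bound
    set e : Fin n → ℝ := fun i => y i - fnet m a ut (x i) with he
    set E : ℝ := norm2 e with hE
    have hE0 : 0 ≤ E := norm2_nonneg e
    set c1 : ℝ := 1 + 2 * ηl * n * K with hc1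
    have hc10 : (0:ℝ) ≤ c1 := by positivity
    -- collapse the c-sum
    have hcollapse : ∀ (i : Fin n) (k : ℕ),
        ∑ c : Fin N, ∑ j ∈ Finset.univ.filter (fun j => S j = c),
          e i * (y j - fnet m a (w k c) (x j)) *
            ((m : ℝ)⁻¹ * dot (x i) (x j) *
              ∑ r ∈ (Qset m R u0 (x i))ᶜ,
                posInd (dot (ut r) (x i)) * posInd (dot (w k c r) (x j))) =
        ∑ j : Fin n, e i * (y j - fnet m a (w k (S j)) (x j)) *
            ((m : ℝ)⁻¹ * dot (x i) (x j) *
              ∑ r ∈ (Qset m R u0 (x i))ᶜ,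
                posInd (dot (ut r) (x i)) * posInd (dot (w k (S j) r) (x j))) := by
      intro i k
      rw [← Finset.sum_fiberwise Finset.univ S (fun j =>
        e i * (y j - fnet m a (w k (S j)) (x j)) *
          ((m : ℝ)⁻¹ * dot (x i) (x j) *
            ∑ r ∈ (Qset m R u0 (x i))ᶜ,
              posInd (dot (ut r) (x i)) * posInd (dot (w k (S j) r) (x j))))]
      apply Finset.sum_congr rfl
      intro c _
      apply Finset.sum_congr rfl
      intro j hj
      rw [Finset.mem_filter] at hj
      rw [hj.2]
    -- per-k bound
    have hperk : ∀ k ∈ Finset.Icc 1 K,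
        ∑ i : Fin n, ∑ j : Fin n, e i * (y j - fnet m a (w k (S j)) (x j)) *
            ((m : ℝ)⁻¹ * dot (x i) (x j) *
              ∑ r ∈ (Qset m R u0 (x i))ᶜ,
                posInd (dot (ut r) (x i)) * posInd (dot (w k (S j) r) (x j))) ≤
          4 * R * (Real.sqrt 2 * c1 * n * E ^ 2) := by
      intro k hk
      set Ek : Fin n → ℝ := fun j => y j - fnet m a (w k (S j)) (x j) with hEk
      have hnormEk : norm2 Ek ≤ Real.sqrt 2 * c1 * E := by
        have h := herr k hk
        have h2 : norm2 Ek ^ 2 ≤ (Real.sqrt 2 * c1 * E) ^ 2 := by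
          calc norm2 Ek ^ 2 ≤ 2 * c1 ^ 2 * E ^ 2 := h
            _ = (Real.sqrt 2 * c1 * E) ^ 2 := by
                rw [mul_pow, mul_pow, Real.sq_sqrt (by norm_num : (0:ℝ) ≤ 2)]
        have h3 := Real.sqrt_le_sqrt h2
        rwa [Real.sqrt_sq (norm2_nonneg Ek), Real.sqrt_sq (by positivity)] at h3
      have hsum_e : ∑ i, |e i| ≤ Real.sqrt n * E := sum_abs_le_sqrt_card e
      have hsum_Ek : ∑ j, |Ek j| ≤ Real.sqrt n * (Real.sqrt 2 * c1 * E) :=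
        (sum_abs_le_sqrt_card Ek).trans
          (mul_le_mul_of_nonneg_left hnormEk (Real.sqrt_nonneg _))
      have hterm : ∀ i j : Fin n,
          e i * Ek j * ((m : ℝ)⁻¹ * dot (x i) (x j) *
              ∑ r ∈ (Qset m R u0 (x i))ᶜ,
                posInd (dot (ut r) (x i)) * posInd (dot (w k (S j) r) (x j))) ≤
            |e i| * |Ek j| * (4 * R) := by
        intro i j
        calc e i * Ek j * ((m : ℝ)⁻¹ * dot (x i) (x j) *
              ∑ r ∈ (Qset m R u0 (x i))ᶜ,
                posInd (dot (ut r) (x i)) * posInd (dot (w k (S j) r) (x j)))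
            ≤ |e i * Ek j * ((m : ℝ)⁻¹ * dot (x i) (x j) *
              ∑ r ∈ (Qset m R u0 (x i))ᶜ,
                posInd (dot (ut r) (x i)) * posInd (dot (w k (S j) r) (x j)))| := le_abs_self _
          _ = |e i| * |Ek j| * |(m : ℝ)⁻¹ * dot (x i) (x j) *
              ∑ r ∈ (Qset m R u0 (x i))ᶜ,
                posInd (dot (ut r) (x i)) * posInd (dot (w k (S j) r) (x j))| := by
              rw [abs_mul, abs_mul]
          _ ≤ |e i| * |Ek j| * (4 * R) := by
              apply mul_le_mul_of_nonneg_left (hHbound i j (w k (S j)))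
              positivity
      calc ∑ i : Fin n, ∑ j : Fin n, e i * Ek j *
            ((m : ℝ)⁻¹ * dot (x i) (x j) *
              ∑ r ∈ (Qset m R u0 (x i))ᶜ,
                posInd (dot (ut r) (x i)) * posInd (dot (w k (S j) r) (x j)))
          ≤ ∑ i : Fin n, ∑ j : Fin n, |e i| * |Ek j| * (4 * R) :=
            Finset.sum_le_sum fun i _ => Finset.sum_le_sum fun j _ => hterm i j
        _ = ((∑ i, |e i|) * (∑ j, |Ek j|)) * (4 * R) := by
            simp_rw [← Finset.sum_mul]
            rw [← Finset.sum_mul_sum]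
        _ ≤ ((Real.sqrt n * E) * (Real.sqrt n * (Real.sqrt 2 * c1 * E))) * (4 * R) := by
            apply mul_le_mul_of_nonneg_right _ (by positivity)
            apply mul_le_mul hsum_e hsum_Ek
              (Finset.sum_nonneg fun j _ => abs_nonneg _) (by positivity)
        _ = 4 * R * (Real.sqrt 2 * c1 * n * E ^ 2) := by
            have hnn : Real.sqrt n * Real.sqrt n = (n:ℝ) :=
              Real.mul_self_sqrt (Nat.cast_nonneg n)
            linear_combination (4 * R * (Real.sqrt 2 * c1 * E ^ 2)) * hnn
    -- assemble
    have hpre : (0:ℝ) ≤ 2 * ηg * ηl / N := by positivity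
    have hTeq : ∑ i : Fin n, ∑ k ∈ Finset.Icc 1 K, ∑ c : Fin N,
          ∑ j ∈ Finset.univ.filter (fun j => S j = c),
            e i * (y j - fnet m a (w k c) (x j)) *
              ((m : ℝ)⁻¹ * dot (x i) (x j) *
                ∑ r ∈ (Qset m R u0 (x i))ᶜ,
                  posInd (dot (ut r) (x i)) * posInd (dot (w k c r) (x j))) =
        ∑ k ∈ Finset.Icc 1 K, ∑ i : Fin n, ∑ j : Fin n,
          e i * (y j - fnet m a (w k (S j)) (x j)) *
            ((m : ℝ)⁻¹ * dot (x i) (x j) *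
              ∑ r ∈ (Qset m R u0 (x i))ᶜ,
                posInd (dot (ut r) (x i)) * posInd (dot (w k (S j) r) (x j))) := by
      rw [Finset.sum_comm]
      exact Finset.sum_congr rfl fun k _ => Finset.sum_congr rfl fun i _ => hcollapse i k
    have hTbound : ∑ k ∈ Finset.Icc 1 K, ∑ i : Fin n, ∑ j : Fin n,
          e i * (y j - fnet m a (w k (S j)) (x j)) *
            ((m : ℝ)⁻¹ * dot (x i) (x j) *
              ∑ r ∈ (Qset m R u0 (x i))ᶜ,
                posInd (dot (ut r) (x i)) * posInd (dot (w k (S j) r) (x j))) ≤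
        (K : ℝ) * (4 * R * (Real.sqrt 2 * c1 * n * E ^ 2)) := by
      calc ∑ k ∈ Finset.Icc 1 K, ∑ i : Fin n, ∑ j : Fin n,
            e i * (y j - fnet m a (w k (S j)) (x j)) *
              ((m : ℝ)⁻¹ * dot (x i) (x j) *
                ∑ r ∈ (Qset m R u0 (x i))ᶜ,
                  posInd (dot (ut r) (x i)) * posInd (dot (w k (S j) r) (x j)))
          ≤ ∑ _k ∈ Finset.Icc 1 K, 4 * R * (Real.sqrt 2 * c1 * n * E ^ 2) :=
            Finset.sum_le_sum hperk
        _ = (K : ℝ) * (4 * R * (Real.sqrt 2 * c1 * n * E ^ 2)) := by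
            rw [Finset.sum_const, Nat.card_Icc, nsmul_eq_mul]
            norm_num
    have hsqrt2 : Real.sqrt 2 ≤ 2 := by
      nlinarith [Real.sq_sqrt (by norm_num : (0:ℝ) ≤ 2), Real.sqrt_nonneg 2]
    refine le_trans (mul_le_mul_of_nonneg_left (le_of_eq hTeq) hpre) ?_
    refine le_trans (mul_le_mul_of_nonneg_left hTbound hpre) ?_
    have hZ : (0:ℝ) ≤ ηg * ηl / N * K * c1 * n * R * E ^ 2 := by positivity
    have hl : 2 * ηg * ηl / N * ((K:ℝ) * (4 * R * (Real.sqrt 2 * c1 * n * E ^ 2))) =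
        8 * Real.sqrt 2 * (ηg * ηl / N * K * c1 * n * R * E ^ 2) := by ring
    have hr : 16 * ηg * ηl / N * K * c1 * n * R * E ^ 2 =
        16 * (ηg * ηl / N * K * c1 * n * R * E ^ 2) := by ring
    rw [hl, hr]
    nlinarith [hZ, hsqrt2]
  · -- Frobenius bound
    intro k _
    unfold frobG
    have hentry : ∀ i j : Fin n,
        ((m : ℝ)⁻¹ * dot (x i) (x j) *
          ∑ r ∈ (Qset m R u0 (x i))ᶜ,
            posInd (dot (ut r) (x i)) * posInd (dot (w k (S j) r) (x j))) ^ 2 ≤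
        (4 * R) ^ 2 := by
      intro i j
      have h := hHbound i j (w k (S j))
      calc ((m : ℝ)⁻¹ * dot (x i) (x j) * ∑ r ∈ (Qset m R u0 (x i))ᶜ,
            posInd (dot (ut r) (x i)) * posInd (dot (w k (S j) r) (x j))) ^ 2
          = |(m : ℝ)⁻¹ * dot (x i) (x j) * ∑ r ∈ (Qset m R u0 (x i))ᶜ,
              posInd (dot (ut r) (x i)) * posInd (dot (w k (S j) r) (x j))| ^ 2 := (sq_abs _).symm
        _ ≤ (4 * R) ^ 2 := by
            apply pow_le_pow_left₀ (abs_nonneg _) h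
    calc Real.sqrt (∑ i : Fin n, ∑ j : Fin n, ((m : ℝ)⁻¹ * dot (x i) (x j) *
            ∑ r ∈ (Qset m R u0 (x i))ᶜ,
              posInd (dot (ut r) (x i)) * posInd (dot (w k (S j) r) (x j))) ^ 2)
        ≤ Real.sqrt (∑ _i : Fin n, ∑ _j : Fin n, (4 * R) ^ 2) := by
          apply Real.sqrt_le_sqrt
          apply Finset.sum_le_sum
          intro i _
          exact Finset.sum_le_sum fun j _ => hentry i j
      _ = Real.sqrt (((n : ℝ) * (4 * R)) ^ 2) := by
          congr 1
          simp [Finset.sum_const, Finset.card_univ]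
          ring
      _ = (n : ℝ) * (4 * R) := Real.sqrt_sq (by positivity)
      _ = 4 * n * R := by ring


instance pmUniform_prob : IsProbabilityMeasure pmUniform := by
  constructor
  rw [pmUniform, Measure.add_apply, Measure.smul_apply, Measure.smul_apply,
    Measure.dirac_apply_of_mem (Set.mem_univ _), Measure.dirac_apply_of_mem (Set.mem_univ _)]
  simp only [ENNReal.smul_def, smul_eq_mul, mul_one]
  norm_num
  exact ENNReal.inv_two_add_inv_two

instance stdGaussianPi_prob (d : ℕ) : IsProbabilityMeasure (stdGaussianPi d) := by
  unfold stdGaussianPi; infer_instance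

instance iidGaussian_prob (m d : ℕ) : IsProbabilityMeasure (iidGaussian m d) := by
  unfold iidGaussian; infer_instance

instance iidSign_prob (m : ℕ) : IsProbabilityMeasure (iidSign m) := by
  unfold iidSign; infer_instance

lemma card_Qc_eq {d m : ℕ} {R : ℝ} (hR : 0 < R) {xi : Fin d → ℝ} (hx : norm2 xi = 1)
    (U : Fin m → Fin d → ℝ) :
    (((Qset m R U xi)ᶜ).card : ℝ) =
      ∑ r, (if dot (U r) xi ∈ Set.Ico (-R) R then (1:ℝ) else 0) := by
  classical
  have hset : (Qset m R U xi)ᶜ =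
      Finset.univ.filter (fun r => dot (U r) xi ∈ Set.Ico (-R) R) := by
    ext r
    rw [mem_Qset_compl_iff hR hx, Finset.mem_filter]
    simp
  rw [hset, Finset.card_filter]
  push_cast
  rfl

/-- **Bounding `C₂`** (Claim C.3).  Under the stated error hypothesis, with probability at
least `1 − n·exp(−mR)` over the random initialization,
`C₂ ≤ (16η_g η_l/N)K(1 + 2η_l nK)nR‖y − y(t)‖₂²`, and moreover `‖H(t,k)^⊥‖_F ≤ 4nR`
for every `k ∈ [K]`. -/
theorem bound_C2
    (d m n N K : ℕ) (hm : 0 < m) (hn : 0 < n) (hN : 0 < N) (hK : 0 < K)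
    (R ηl ηg : ℝ) (hR : 0 < R) (hηl : 0 ≤ ηl) (hηg : 0 ≤ ηg)
    (x : Fin n → Fin d → ℝ) (hx : ∀ i, norm2 (x i) = 1) (y : Fin n → ℝ)
    (S : Fin n → Fin N)
    (Ω : Type) [MeasureSpace Ω] [IsProbabilityMeasure (ℙ : Measure Ω)]
    (a : Ω → Fin m → ℝ) (u0 : Ω → Fin m → Fin d → ℝ)
    -- random initialization
    (hlaw : Measure.map (fun ω => (u0 ω, a ω)) ℙ = (iidGaussian m d).prod (iidSign m))
    -- server weights `u(t)` and local weights `w_{k,c}(t)` at round `t`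
    (ut : Ω → Fin m → Fin d → ℝ) (w : Ω → ℕ → Fin N → Fin m → Fin d → ℝ)
    -- assumed global error bound (Eq. (C.5))
    (herr : ∀ ω, ∀ k ∈ Finset.Icc 1 K,
      norm2 (fun i => y i - fnet m (a ω) (w ω k (S i)) (x i)) ^ 2 ≤
        2 * (1 + 2 * ηl * n * K) ^ 2 *
          norm2 (fun i => y i - fnet m (a ω) (ut ω) (x i)) ^ 2) :
    ENNReal.ofReal (1 - (n : ℝ) * Real.exp (-((m : ℝ) * R))) ≤
      ℙ {ω |
        (2 * ηg * ηl / N *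
            ∑ i : Fin n, ∑ k ∈ Finset.Icc 1 K, ∑ c : Fin N,
              ∑ j ∈ Finset.univ.filter (fun j => S j = c),
                (y i - fnet m (a ω) (ut ω) (x i)) *
                  (y j - fnet m (a ω) (w ω k c) (x j)) *
                    ((m : ℝ)⁻¹ * dot (x i) (x j) *
                      ∑ r ∈ (Qset m R (u0 ω) (x i))ᶜ,
                        posInd (dot (ut ω r) (x i)) * posInd (dot (w ω k c r) (x j))) ≤
          16 * ηg * ηl / N * K * (1 + 2 * ηl * n * K) * n * R *
            norm2 (fun i => y i - fnet m (a ω) (ut ω) (x i)) ^ 2) ∧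
        ∀ k ∈ Finset.Icc 1 K,
          frobG (fun i j : Fin n =>
              (m : ℝ)⁻¹ * dot (x i) (x j) *
                ∑ r ∈ (Qset m R (u0 ω) (x i))ᶜ,
                  posInd (dot (ut ω r) (x i)) * posInd (dot (w ω k (S j) r) (x j))) ≤
            4 * n * R} := by
  classical
  -- a.e.-measurability of the initialization map
  have haem : AEMeasurable (fun ω => (u0 ω, a ω)) ℙ := by
    by_contra h
    rw [Measure.map_of_not_aemeasurable h] at hlaw
    have h0 : ((iidGaussian m d).prod (iidSign m)) Set.univ = 1 := measure_univ
    rw [← hlaw] at h0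
    simp at h0
  -- bad events in initialization space
  set Bad : Fin n → Set (Fin m → Fin d → ℝ) := fun i =>
    {U | 4 * m * R ≤ ∑ r, (if dot (U r) (x i) ∈ Set.Ico (-R) R then (1:ℝ) else 0)} with hBad
  have hBadm : ∀ i, MeasurableSet (Bad i) := by
    intro i
    apply measurableSet_le measurable_const
    apply Finset.measurable_sum
    intro r _
    exact Measurable.ite
      (((measurable_dot_xi (x i)).comp (measurable_pi_apply r)) measurableSet_Ico)
      measurable_const measurable_const
  have hxsq : ∀ i, ∑ j, (x i) j ^ 2 = 1 := by
    intro i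
    have h := sq_norm2 (x i)
    rw [hx i] at h
    rw [← h]
    norm_num
  have hBadle : ∀ i, iidGaussian m d (Bad i) ≤ ENNReal.ofReal (Real.exp (-((m:ℝ) * R))) := by
    intro i
    exact chernoff_bound m R hR (x i) (hxsq i)
  set E : Set Ω :=
    {ω | ∀ i, (((Qset m R (u0 ω) (x i))ᶜ).card : ℝ) ≤ 4 * m * R} with hE
  have hEc : Eᶜ ⊆ (fun ω => (u0 ω, a ω)) ⁻¹' ((⋃ i, Bad i) ×ˢ Set.univ) := by
    intro ω hω
    simp only [hE, Set.mem_compl_iff, Set.mem_setOf_eq, not_forall, not_le] at hω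
    obtain ⟨i, hi⟩ := hω
    refine ⟨Set.mem_iUnion.mpr ⟨i, ?_⟩, Set.mem_univ _⟩
    simp only [hBad, Set.mem_setOf_eq]
    rw [← card_Qc_eq hR (hx i) (u0 ω)]
    exact hi.le
  have hmeasB : MeasurableSet ((⋃ i, Bad i) ×ˢ (Set.univ : Set (Fin m → ℝ))) :=
    (MeasurableSet.iUnion fun i => hBadm i).prod MeasurableSet.univ
  have hEcm : ℙ Eᶜ ≤ ENNReal.ofReal ((n:ℝ) * Real.exp (-((m:ℝ) * R))) := by
    calc ℙ Eᶜ ≤ ℙ ((fun ω => (u0 ω, a ω)) ⁻¹' ((⋃ i, Bad i) ×ˢ Set.univ)) :=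
          measure_mono hEc
      _ = (Measure.map (fun ω => (u0 ω, a ω)) ℙ) ((⋃ i, Bad i) ×ˢ Set.univ) :=
          (Measure.map_apply_of_aemeasurable haem hmeasB).symm
      _ = ((iidGaussian m d).prod (iidSign m)) ((⋃ i, Bad i) ×ˢ Set.univ) := by rw [hlaw]
      _ = iidGaussian m d (⋃ i, Bad i) * iidSign m Set.univ := Measure.prod_prod _ _
      _ = iidGaussian m d (⋃ i, Bad i) := by rw [measure_univ, mul_one]
      _ ≤ ∑ i, iidGaussian m d (Bad i) := measure_iUnion_fintype_le _ _
      _ ≤ ∑ _i : Fin n, ENNReal.ofReal (Real.exp (-((m:ℝ) * R))) :=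
          Finset.sum_le_sum fun i _ => hBadle i
      _ = (n : ℝ≥0∞) * ENNReal.ofReal (Real.exp (-((m:ℝ) * R))) := by
          rw [Finset.sum_const, Finset.card_univ, Fintype.card_fin, nsmul_eq_mul]
      _ = ENNReal.ofReal ((n:ℝ) * Real.exp (-((m:ℝ) * R))) := by
          rw [ENNReal.ofReal_mul (Nat.cast_nonneg n), ENNReal.ofReal_natCast]
  -- E is contained in the target event
  have hsubset : E ⊆ {ω |
      (2 * ηg * ηl / N *
          ∑ i : Fin n, ∑ k ∈ Finset.Icc 1 K, ∑ c : Fin N,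
            ∑ j ∈ Finset.univ.filter (fun j => S j = c),
              (y i - fnet m (a ω) (ut ω) (x i)) *
                (y j - fnet m (a ω) (w ω k c) (x j)) *
                  ((m : ℝ)⁻¹ * dot (x i) (x j) *
                    ∑ r ∈ (Qset m R (u0 ω) (x i))ᶜ,
                      posInd (dot (ut ω r) (x i)) * posInd (dot (w ω k c r) (x j))) ≤
        16 * ηg * ηl / N * K * (1 + 2 * ηl * n * K) * n * R *
          norm2 (fun i => y i - fnet m (a ω) (ut ω) (x i)) ^ 2) ∧
      ∀ k ∈ Finset.Icc 1 K,
        frobG (fun i j : Fin n =>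
            (m : ℝ)⁻¹ * dot (x i) (x j) *
              ∑ r ∈ (Qset m R (u0 ω) (x i))ᶜ,
                posInd (dot (ut ω r) (x i)) * posInd (dot (w ω k (S j) r) (x j))) ≤
          4 * n * R} := by
    intro ω hω
    exact deterministic_part d m n N K hm R ηl ηg hR hηl hηg x hx y S
      (a ω) (u0 ω) (ut ω) (w ω) (herr ω) hω
  calc ENNReal.ofReal (1 - (n : ℝ) * Real.exp (-((m : ℝ) * R)))
      = 1 - ENNReal.ofReal ((n:ℝ) * Real.exp (-((m:ℝ) * R))) := by
        rw [ENNReal.ofReal_sub _ (by positivity), ENNReal.ofReal_one]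
    _ ≤ 1 - ℙ Eᶜ := tsub_le_tsub_left hEcm 1
    _ ≤ ℙ E := by
        rw [tsub_le_iff_right]
        calc (1:ℝ≥0∞) = ℙ (Set.univ : Set Ω) := measure_univ.symm
          _ = ℙ (E ∪ Eᶜ) := by rw [Set.union_compl_self]
          _ ≤ ℙ E + ℙ Eᶜ := measure_union_le _ _
    _ ≤ _ := measure_mono hsubset


end
end

section
/- Fix x ∈ ℝ^d with ‖x‖₂ = 1 and R ∈ (0,1), and let u_1,…,u_m be i.i.d. samples from N(0,I_d). Let ζ = Σ_{r=1}^m 1[|u_r^⊤ x| < R] be the number of neurons whose activation pattern at x can be flipped by a perturbation of size at most R. Then Pr[ζ > 4mR] ≤ exp(−mR). -/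
open MeasureTheory ProbabilityTheory Real
open scoped BigOperators ENNReal NNReal ProbabilityTheory

noncomputable section

section AuxFlip

lemma conv_ptwise {v₁ v₂ : ℝ} (h₁ : 0 < v₁) (h₂ : 0 < v₂) (t y : ℝ) :
    ((Real.sqrt (2*π*v₁))⁻¹ * rexp (-y^2/(2*v₁))) *
      ((Real.sqrt (2*π*v₂))⁻¹ * rexp (-(t-y)^2/(2*v₂)))
    = ((Real.sqrt (2*π*v₁))⁻¹ * (Real.sqrt (2*π*v₂))⁻¹ * rexp (-t^2/(2*(v₁+v₂)))) *
        rexp (-((v₁+v₂)/(2*(v₁*v₂))) * (y - v₁*t/(v₁+v₂))^2) := by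
  have hV : v₁ + v₂ ≠ 0 := by positivity
  have hexp : (-y^2/(2*v₁)) + (-(t-y)^2/(2*v₂))
      = (-t^2/(2*(v₁+v₂))) + (-((v₁+v₂)/(2*(v₁*v₂))) * (y - v₁*t/(v₁+v₂))^2) := by
    field_simp
    ring
  calc ((Real.sqrt (2*π*v₁))⁻¹ * rexp (-y^2/(2*v₁))) *
      ((Real.sqrt (2*π*v₂))⁻¹ * rexp (-(t-y)^2/(2*v₂)))
      = ((Real.sqrt (2*π*v₁))⁻¹ * (Real.sqrt (2*π*v₂))⁻¹) *
        rexp ((-y^2/(2*v₁)) + (-(t-y)^2/(2*v₂))) := by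
        rw [Real.exp_add]; ring
    _ = ((Real.sqrt (2*π*v₁))⁻¹ * (Real.sqrt (2*π*v₂))⁻¹) *
        (rexp (-t^2/(2*(v₁+v₂))) * rexp (-((v₁+v₂)/(2*(v₁*v₂))) * (y - v₁*t/(v₁+v₂))^2)) := by
        rw [hexp, Real.exp_add]
    _ = _ := by ring

lemma conv_const {v₁ v₂ : ℝ} (h₁ : 0 < v₁) (h₂ : 0 < v₂) :
    (Real.sqrt (2*π*v₁))⁻¹ * (Real.sqrt (2*π*v₂))⁻¹ *
      Real.sqrt (π / ((v₁+v₂)/(2*(v₁*v₂))))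
    = (Real.sqrt (2*π*(v₁+v₂)))⁻¹ := by
  have hV : (0:ℝ) < v₁ + v₂ := by positivity
  have hpi := Real.pi_pos
  rw [← Real.sqrt_inv, ← Real.sqrt_inv, ← Real.sqrt_inv, ← Real.sqrt_mul (by positivity),
    ← Real.sqrt_mul (by positivity)]
  congr 1
  field_simp

lemma conv_integral (v₁ v₂ : ℝ≥0) (h₁ : v₁ ≠ 0) (h₂ : v₂ ≠ 0) (t : ℝ) :
    ∫ y, gaussianPDFReal 0 v₁ y * gaussianPDFReal 0 v₂ (t - y)
      = gaussianPDFReal 0 (v₁ + v₂) t := by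
  have hv₁ : (0:ℝ) < v₁ := by positivity
  have hv₂ : (0:ℝ) < v₂ := by positivity
  have hV : (0:ℝ) < (v₁:ℝ) + v₂ := by positivity
  have ha : (0:ℝ) < ((v₁:ℝ)+v₂)/(2*((v₁:ℝ)*v₂)) := by positivity
  set a : ℝ := ((v₁:ℝ)+v₂)/(2*((v₁:ℝ)*v₂)) with ha_def
  set c : ℝ := (v₁:ℝ)*t/((v₁:ℝ)+v₂) with hc_def
  set C : ℝ := (Real.sqrt (2*π*v₁))⁻¹ * (Real.sqrt (2*π*v₂))⁻¹ * rexp (-t^2/(2*((v₁:ℝ)+v₂)))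
    with hC_def
  have hpt : ∀ y, gaussianPDFReal 0 v₁ y * gaussianPDFReal 0 v₂ (t - y)
      = C * rexp (-a * (y - c)^2) := by
    intro y
    simp only [gaussianPDFReal, sub_zero]
    exact conv_ptwise hv₁ hv₂ t y
  calc ∫ y, gaussianPDFReal 0 v₁ y * gaussianPDFReal 0 v₂ (t - y)
      = ∫ y, C * rexp (-a * (y - c)^2) := by simp_rw [hpt]
    _ = C * ∫ y, rexp (-a * (y - c)^2) := by rw [MeasureTheory.integral_const_mul]
    _ = C * ∫ y, rexp (-a * y^2) := by
        rw [integral_sub_right_eq_self (fun y => rexp (-a * y^2)) c]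
    _ = C * Real.sqrt (π / a) := by rw [integral_gaussian]
    _ = gaussianPDFReal 0 (v₁ + v₂) t := by
        simp only [gaussianPDFReal, sub_zero, hC_def]
        rw [mul_comm ((Real.sqrt (2*π*v₁))⁻¹ * (Real.sqrt (2*π*v₂))⁻¹) (rexp _), mul_assoc,
          mul_comm (rexp _)]
        push_cast
        rw [conv_const hv₁ hv₂]

section ConvMeasure

lemma gaussian_conv (v₁ v₂ : ℝ≥0) :
    Measure.map (fun p : ℝ × ℝ => p.1 + p.2)
        ((gaussianReal 0 v₁).prod (gaussianReal 0 v₂)) = gaussianReal 0 (v₁ + v₂) := by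
  by_cases h₁ : v₁ = 0
  · subst h₁
    rw [gaussianReal_zero_var, Measure.dirac_prod,
      Measure.map_map measurable_add measurable_prodMk_left]
    have : ((fun p : ℝ × ℝ => p.1 + p.2) ∘ Prod.mk (0:ℝ)) = id := by
      funext z; simp
    rw [this, Measure.map_id, zero_add]
  by_cases h₂ : v₂ = 0
  · subst h₂
    rw [gaussianReal_zero_var, Measure.prod_dirac,
      Measure.map_map measurable_add
        (show Measurable fun x : ℝ => (x, (0:ℝ)) from measurable_id.prodMk measurable_const)]
    have : ((fun p : ℝ × ℝ => p.1 + p.2) ∘ (fun x : ℝ => (x, (0:ℝ)))) = id := by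
      funext z; simp
    rw [this, Measure.map_id, add_zero]
  have hV : v₁ + v₂ ≠ 0 := by simp [h₁]
  have hv₁ : (0:ℝ) < v₁ := by positivity
  have hv₂ : (0:ℝ) < v₂ := by positivity
  have ha : (0:ℝ) < ((v₁:ℝ)+v₂)/(2*((v₁:ℝ)*v₂)) := by positivity
  ext s hs
  rw [Measure.map_apply measurable_add hs,
    Measure.prod_apply (measurable_add hs)]
  have key : ∀ y : ℝ, (gaussianReal 0 v₂) (Prod.mk y ⁻¹' ((fun p : ℝ × ℝ => p.1 + p.2) ⁻¹' s))
      = ∫⁻ w in s, ENNReal.ofReal (gaussianPDFReal 0 v₂ (w - y)) := by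
    intro y
    have hpre : (Prod.mk y ⁻¹' ((fun p : ℝ × ℝ => p.1 + p.2) ⁻¹' s)) = (fun z => y + z) ⁻¹' s :=
      rfl
    rw [hpre, ← Measure.map_apply (measurable_const_add y) hs, gaussianReal_map_const_add,
      zero_add, gaussianReal_apply _ (by exact h₂) s]
    apply setLIntegral_congr_fun hs
    intro w _
    dsimp only
    rw [gaussianPDF, gaussianPDFReal_sub, zero_add]
  simp_rw [key]
  rw [gaussianReal_of_var_ne_zero 0 h₁,
    lintegral_withDensity_eq_lintegral_mul _ (measurable_gaussianPDF _ _)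
      (by
        refine Measurable.lintegral_prod_right
          (f := fun y w => ENNReal.ofReal (gaussianPDFReal 0 v₂ (w - y))) ?_
        exact (((measurable_gaussianPDFReal 0 v₂).comp
          (measurable_snd.sub measurable_fst)).ennreal_ofReal))]
  have swap := lintegral_lintegral_swap (μ := (volume : Measure ℝ))
    (ν := (volume : Measure ℝ).restrict s)
    (f := fun y w => gaussianPDF 0 v₁ y * ENNReal.ofReal (gaussianPDFReal 0 v₂ (w - y)))
    (((measurable_gaussianPDF 0 v₁).comp measurable_fst).mul
      (((measurable_gaussianPDFReal 0 v₂).comp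
        (measurable_snd.sub measurable_fst)).ennreal_ofReal)).aemeasurable
  simp only [Pi.mul_apply] at swap ⊢
  have step : ∀ y : ℝ, gaussianPDF 0 v₁ y * ∫⁻ w in s,
      ENNReal.ofReal (gaussianPDFReal 0 v₂ (w - y))
      = ∫⁻ w in s, gaussianPDF 0 v₁ y * ENNReal.ofReal (gaussianPDFReal 0 v₂ (w - y)) :=
    fun y => (lintegral_const_mul _ (((measurable_gaussianPDFReal 0 v₂).comp
      (measurable_sub_const y)).ennreal_ofReal)).symm
  simp_rw [step]
  rw [swap]
  rw [gaussianReal_apply _ hV s]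
  apply setLIntegral_congr_fun hs
  intro w _
  have hint : Integrable (fun y => gaussianPDFReal 0 v₁ y * gaussianPDFReal 0 v₂ (w - y)) := by
    have hpt : (fun y => gaussianPDFReal 0 v₁ y * gaussianPDFReal 0 v₂ (w - y))
        = fun y => ((Real.sqrt (2*π*v₁))⁻¹ * (Real.sqrt (2*π*v₂))⁻¹ *
            rexp (-w^2/(2*((v₁:ℝ)+v₂)))) *
          rexp (-(((v₁:ℝ)+v₂)/(2*((v₁:ℝ)*v₂))) * (y - (v₁:ℝ)*w/((v₁:ℝ)+v₂))^2) := by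
      funext y
      simp only [gaussianPDFReal, sub_zero]
      exact conv_ptwise hv₁ hv₂ w y
    rw [hpt]
    exact ((integrable_exp_neg_mul_sq ha).comp_sub_right _).const_mul _
  calc ∫⁻ y, gaussianPDF 0 v₁ y * ENNReal.ofReal (gaussianPDFReal 0 v₂ (w - y))
      = ∫⁻ y, ENNReal.ofReal (gaussianPDFReal 0 v₁ y * gaussianPDFReal 0 v₂ (w - y)) := by
        congr 1; funext y
        rw [gaussianPDF, ← ENNReal.ofReal_mul (gaussianPDFReal_nonneg _ _ _)]
    _ = ENNReal.ofReal (∫ y, gaussianPDFReal 0 v₁ y * gaussianPDFReal 0 v₂ (w - y)) := by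
        rw [← ofReal_integral_eq_lintegral_ofReal hint
          (ae_of_all _ fun y => mul_nonneg (gaussianPDFReal_nonneg _ _ _)
            (gaussianPDFReal_nonneg _ _ _))]
    _ = gaussianPDF 0 (v₁ + v₂) w := by rw [conv_integral v₁ v₂ h₁ h₂ w, gaussianPDF]

end ConvMeasure

section MapDot

lemma map_sum_gaussian : ∀ (d : ℕ) (x : Fin d → ℝ),
    Measure.map (fun u : Fin d → ℝ => ∑ i, x i * u i)
        (Measure.pi fun _ => gaussianReal 0 1)
      = gaussianReal 0 (Real.toNNReal (∑ i, x i ^ 2)) := by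
  intro d
  induction d with
  | zero =>
    intro x
    simp only [Finset.univ_eq_empty, Finset.sum_empty]
    rw [show Real.toNNReal 0 = 0 from by simp, gaussianReal_zero_var, Measure.map_const,
      measure_univ, one_smul]
  | succ n ih =>
    intro x
    have hmp := measurePreserving_piFinSuccAbove (fun _ : Fin (n+1) => gaussianReal 0 1) 0
    set e := MeasurableEquiv.piFinSuccAbove (fun _ : Fin (n+1) => ℝ) 0 with he
    have hg : Measurable (fun z : Fin n → ℝ => ∑ j, x j.succ * z j) :=
      Finset.measurable_sum _ fun j _ => (measurable_pi_apply j).const_mul _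
    have hf : Measurable (fun z : ℝ => x 0 * z) := measurable_id.const_mul _
    have hF : Measurable (fun p : ℝ × (Fin n → ℝ) => x 0 * p.1 + ∑ j, x j.succ * p.2 j) :=
      (hf.comp measurable_fst).add (hg.comp measurable_snd)
    have claim1 : (fun u : Fin (n+1) → ℝ => ∑ i, x i * u i)
        = (fun p : ℝ × (Fin n → ℝ) => x 0 * p.1 + ∑ j, x j.succ * p.2 j) ∘ e := by
      funext u
      rw [Function.comp_apply, Fin.sum_univ_succ]
      congr 1
    rw [claim1, ← Measure.map_map hF e.measurable, hmp.map_eq]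
    have hprodmap : (fun p : ℝ × (Fin n → ℝ) => x 0 * p.1 + ∑ j, x j.succ * p.2 j)
        = (fun p : ℝ × ℝ => p.1 + p.2) ∘
          Prod.map (fun z : ℝ => x 0 * z) (fun z : Fin n → ℝ => ∑ j, x j.succ * z j) := rfl
    rw [hprodmap, ← Measure.map_map measurable_add (hf.prodMap hg),
      ← Measure.map_prod_map _ _ hf hg]
    rw [show (Measure.pi fun j : Fin n =>
        (fun _ : Fin (n+1) => gaussianReal 0 1) ((0 : Fin (n+1)).succAbove j))
        = Measure.pi fun _ : Fin n => gaussianReal 0 1 from rfl]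
    rw [ih (fun j => x j.succ), gaussianReal_map_const_mul (x 0), mul_zero, gaussian_conv]
    congr 1
    apply NNReal.coe_injective
    push_cast
    rw [Real.coe_toNNReal _ (Finset.sum_nonneg fun i _ => sq_nonneg _),
      Real.coe_toNNReal _ (Finset.sum_nonneg fun i _ => sq_nonneg _),
      Fin.sum_univ_succ]
    ring

end MapDot

section LintegralPi

lemma lintegral_pi_pow {α : Type*} [MeasurableSpace α] (μ : Measure α) [IsProbabilityMeasure μ]
    (φ : α → ℝ≥0∞) (hφ : Measurable φ) (m : ℕ) :
    ∫⁻ u : Fin m → α, ∏ r, φ (u r) ∂(Measure.pi fun _ => μ) = (∫⁻ z, φ z ∂μ) ^ m := by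
  induction m with
  | zero => simp
  | succ n ih =>
    have hmp := measurePreserving_piFinSuccAbove (fun _ : Fin (n+1) => μ) 0
    have hfprod : Measurable (fun p : α × (Fin n → α) => φ p.1 * ∏ r, φ (p.2 r)) :=
      (hφ.comp measurable_fst).mul <| Finset.measurable_prod _ fun r _ =>
        hφ.comp ((measurable_pi_apply r).comp measurable_snd)
    have h1 := hmp.lintegral_comp hfprod
    have h2 : ∀ u : Fin (n+1) → α,
        (fun p : α × (Fin n → α) => φ p.1 * ∏ r, φ (p.2 r))
          (MeasurableEquiv.piFinSuccAbove (fun _ => α) 0 u) = ∏ r, φ (u r) := by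
      intro u
      show φ (u 0) * ∏ r, φ (u ((0 : Fin (n+1)).succAbove r)) = ∏ r, φ (u r)
      rw [Fin.prod_univ_succ]
      congr 1
    simp_rw [h2] at h1
    rw [h1, lintegral_prod_mul (f := φ) (g := fun z : Fin n → α => ∏ r, φ (z r))
      hφ.aemeasurable
      (by exact (Finset.measurable_prod Finset.univ fun r _ =>
        hφ.comp (measurable_pi_apply r)).aemeasurable),
      ih, pow_succ]
    ring

end LintegralPi


instance stdGaussianPi.instIsProbabilityMeasure (d : ℕ) :
    IsProbabilityMeasure (stdGaussianPi d) := by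
  unfold stdGaussianPi; infer_instance

instance iidGaussian.instIsProbabilityMeasure (m d : ℕ) :
    IsProbabilityMeasure (iidGaussian m d) := by
  unfold iidGaussian; infer_instance

end AuxFlip

open Classical in
/-- **Flip-count concentration** (Eq. (B.2)).  With `u_1, …, u_m` i.i.d. `N(0, I_d)` and a
unit vector `x`, the number `ζ` of neurons with `|u_r^⊤ x| < R` satisfies
`Pr[ζ > 4mR] ≤ exp(−mR)`. -/
theorem flip_count_concentration
    (d m : ℕ) (x : Fin d → ℝ) (hx : norm2 x = 1) (R : ℝ) (hR : 0 < R) (hR1 : R < 1)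
    (Ω : Type) [MeasureSpace Ω] [IsProbabilityMeasure (ℙ : Measure Ω)]
    (W : Ω → Fin m → Fin d → ℝ)
    (hlaw : Measure.map W ℙ = iidGaussian m d) :
    ℙ {ω | 4 * (m : ℝ) * R <
        ((Finset.univ.filter fun r : Fin m => |dot (W ω r) x| < R).card : ℝ)} ≤
      ENNReal.ofReal (Real.exp (-((m : ℝ) * R))) := by
  classical
  have hdot : Measurable (fun w : Fin d → ℝ => dot w x) := by
    unfold dot
    exact Finset.measurable_sum _ fun i _ => (measurable_pi_apply i).mul_const _
  set S : Set (Fin m → Fin d → ℝ) := {u | 4 * (m : ℝ) * R <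
      ((Finset.univ.filter fun r : Fin m => |dot (u r) x| < R).card : ℝ)} with hS_def
  have hcard : ∀ u : Fin m → Fin d → ℝ,
      ((Finset.univ.filter fun r : Fin m => |dot (u r) x| < R).card : ℝ)
      = ∑ r : Fin m, if |dot (u r) x| < R then (1:ℝ) else 0 := by
    intro u; rw [Finset.card_filter]; push_cast; rfl
  have hmcard : Measurable (fun u : Fin m → Fin d → ℝ =>
      ((Finset.univ.filter fun r : Fin m => |dot (u r) x| < R).card : ℝ)) := by
    simp only [hcard]
    exact Finset.measurable_sum _ fun r _ =>
      Measurable.ite (measurableSet_lt ((hdot.comp (measurable_pi_apply r)).abs)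
        measurable_const) measurable_const measurable_const
  have hS : MeasurableSet S := measurableSet_lt measurable_const hmcard
  have hW : AEMeasurable W ℙ := by
    by_contra h
    rw [Measure.map_of_not_aemeasurable h] at hlaw
    exact (IsProbabilityMeasure.ne_zero (iidGaussian m d)) hlaw.symm
  have hset : {ω | 4 * (m : ℝ) * R <
      ((Finset.univ.filter fun r : Fin m => |dot (W ω r) x| < R).card : ℝ)} = W ⁻¹' S := rfl
  rw [hset, ← Measure.map_apply_of_aemeasurable hW hS, hlaw]
  -- set up the exponential moment
  set c : ℝ≥0∞ := ENNReal.ofReal (Real.exp 1) with hc_def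
  set φ : (Fin d → ℝ) → ℝ≥0∞ := fun w => if |dot w x| < R then c else 1 with hφ_def
  have hφm : Measurable φ :=
    Measurable.ite (measurableSet_lt hdot.abs measurable_const) measurable_const measurable_const
  have hprod : ∀ u : Fin m → Fin d → ℝ, (∏ r, φ (u r))
      = ENNReal.ofReal (Real.exp
          ((Finset.univ.filter fun r : Fin m => |dot (u r) x| < R).card : ℝ)) := by
    intro u
    have : (∏ r, φ (u r)) = c ^ (Finset.univ.filter fun r : Fin m => |dot (u r) x| < R).card := by
      rw [hφ_def]
      simp only []
      rw [Finset.prod_ite, Finset.prod_const, Finset.prod_const_one, mul_one]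
    rw [this, hc_def, ← ENNReal.ofReal_pow (Real.exp_pos 1).le, ← Real.exp_nat_mul, mul_one]
  have hsub : S ⊆ {u : Fin m → Fin d → ℝ |
      ENNReal.ofReal (Real.exp (4 * (m:ℝ) * R)) ≤ ∏ r, φ (u r)} := by
    intro u hu
    rw [Set.mem_setOf_eq, hprod u]
    exact ENNReal.ofReal_le_ofReal (Real.exp_le_exp.mpr (le_of_lt hu))
  have hmeas_prod : Measurable fun u : Fin m → Fin d → ℝ => ∏ r, φ (u r) :=
    Finset.measurable_prod _ fun r _ => hφm.comp (measurable_pi_apply r)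
  have markov := meas_ge_le_lintegral_div (μ := iidGaussian m d) hmeas_prod.aemeasurable
    (ε := ENNReal.ofReal (Real.exp (4 * (m:ℝ) * R)))
    (by simp [Real.exp_pos]) ENNReal.ofReal_ne_top
  -- law of the projection
  have hmap : Measure.map (fun w : Fin d → ℝ => dot w x) (stdGaussianPi d) = gaussianReal 0 1 := by
    have hcomm : (fun w : Fin d → ℝ => dot w x) = fun w => ∑ i, x i * w i := by
      funext w; unfold dot; exact Finset.sum_congr rfl fun i _ => mul_comm _ _
    rw [hcomm]
    unfold stdGaussianPi
    rw [map_sum_gaussian d x]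
    have hx1 : (∑ i, x i ^ 2) = 1 := by
      have h0 : 0 ≤ ∑ i, x i ^ 2 := Finset.sum_nonneg fun i _ => sq_nonneg _
      have hsq := Real.sq_sqrt h0
      unfold norm2 at hx
      rw [hx] at hsq
      nlinarith
    rw [hx1]
    norm_num
  have hA : MeasurableSet {w : Fin d → ℝ | |dot w x| < R} :=
    measurableSet_lt hdot.abs measurable_const
  have hball : (stdGaussianPi d) {w : Fin d → ℝ | |dot w x| < R} ≤ ENNReal.ofReal R := by
    have hpre : {w : Fin d → ℝ | |dot w x| < R}
        = (fun w : Fin d → ℝ => dot w x) ⁻¹' {z : ℝ | |z| < R} := rfl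
    have hIoo : {z : ℝ | |z| < R} = Set.Ioo (-R) R := by
      ext z; simp [abs_lt, Set.mem_Ioo]
    rw [hpre, ← Measure.map_apply hdot (by rw [hIoo]; exact measurableSet_Ioo), hmap, hIoo,
      gaussianReal_apply_eq_integral 0 one_ne_zero _]
    apply ENNReal.ofReal_le_ofReal
    have hbound : ∀ z ∈ Set.Ioo (-R) R, gaussianPDFReal 0 1 z ≤ 1/2 := by
      intro z _
      rw [gaussianPDFReal]
      have h2pi : (2:ℝ) ≤ Real.sqrt (2 * π * 1) := by
        nlinarith [Real.sq_sqrt (by positivity : (0:ℝ) ≤ 2 * π * 1),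
          Real.sqrt_nonneg (2 * π * 1), Real.two_le_pi]
      have hinv : (Real.sqrt (2 * π * 1))⁻¹ ≤ 1/2 := by
        rw [show (1:ℝ)/2 = 2⁻¹ by norm_num]
        exact inv_anti₀ (by norm_num) h2pi
      have hexp : rexp (-(z - 0)^2 / (2 * (1:ℝ≥0))) ≤ 1 := by
        rw [Real.exp_le_one_iff]
        have : (0:ℝ) < 2 * ((1:ℝ≥0):ℝ) := by norm_num
        apply div_nonpos_of_nonpos_of_nonneg
        · simp [sq_nonneg]
        · positivity
      calc (Real.sqrt (2 * π * 1))⁻¹ * rexp (-(z - 0)^2 / (2 * (1:ℝ≥0)))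
          ≤ (1/2) * 1 := by
            apply mul_le_mul hinv hexp (Real.exp_pos _).le (by norm_num)
        _ = 1/2 := by norm_num
    calc ∫ z in Set.Ioo (-R) R, gaussianPDFReal 0 1 z
        ≤ ∫ _z in Set.Ioo (-R) R, (1/2 : ℝ) := by
          apply setIntegral_mono_on ((integrable_gaussianPDFReal 0 1).integrableOn)
            ((integrableOn_const_iff (C := (1/2:ℝ))).mpr (Or.inr (by rw [Real.volume_Ioo]; exact ENNReal.ofReal_lt_top)))
            measurableSet_Ioo hbound
      _ = R := by
          rw [setIntegral_const, measureReal_def, Real.volume_Ioo,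
            ENNReal.toReal_ofReal (by linarith : (0:ℝ) ≤ R - -R)]
          simp only [smul_eq_mul]
          ring
  have hfactor : ∫⁻ w, φ w ∂(stdGaussianPi d) ≤ ENNReal.ofReal (Real.exp (Real.exp 1 * R)) := by
    have hsplit : ∫⁻ w, φ w ∂(stdGaussianPi d)
        = c * (stdGaussianPi d) {w : Fin d → ℝ | |dot w x| < R}
          + (stdGaussianPi d) {w : Fin d → ℝ | |dot w x| < R}ᶜ := by
      rw [← lintegral_add_compl φ hA]
      congr 1
      · rw [setLIntegral_congr_fun (f := φ) (g := fun _ => c) hA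
          (fun w hw => if_pos hw), setLIntegral_const]
      · rw [setLIntegral_congr_fun (f := φ) (g := fun _ => 1) hA.compl
          (fun w hw => if_neg hw), setLIntegral_const, one_mul]
    rw [hsplit]
    calc c * (stdGaussianPi d) {w : Fin d → ℝ | |dot w x| < R}
          + (stdGaussianPi d) {w : Fin d → ℝ | |dot w x| < R}ᶜ
        ≤ c * ENNReal.ofReal R + 1 := add_le_add (mul_le_mul_right hball c) prob_le_one
      _ = ENNReal.ofReal (Real.exp 1 * R + 1) := by
          rw [hc_def, ← ENNReal.ofReal_mul (Real.exp_pos 1).le, ← ENNReal.ofReal_one,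
            ← ENNReal.ofReal_add (by positivity) zero_le_one]
      _ ≤ ENNReal.ofReal (Real.exp (Real.exp 1 * R)) :=
          ENNReal.ofReal_le_ofReal (by linarith [Real.add_one_le_exp (Real.exp 1 * R)])
  have hpi : iidGaussian m d = Measure.pi fun _ : Fin m => stdGaussianPi d := rfl
  have htotal : ∫⁻ u, ∏ r, φ (u r) ∂(iidGaussian m d)
      = (∫⁻ w, φ w ∂(stdGaussianPi d)) ^ m := by
    rw [hpi]; exact lintegral_pi_pow (stdGaussianPi d) φ hφm m
  have he3 : Real.exp 1 ≤ 3 := le_of_lt (lt_trans Real.exp_one_lt_d9 (by norm_num))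
  have hmR : (0:ℝ) ≤ (m:ℝ) * R := mul_nonneg (Nat.cast_nonneg m) hR.le
  calc (iidGaussian m d) S
      ≤ (iidGaussian m d) {u : Fin m → Fin d → ℝ |
          ENNReal.ofReal (Real.exp (4 * (m:ℝ) * R)) ≤ ∏ r, φ (u r)} := measure_mono hsub
    _ ≤ (∫⁻ u, ∏ r, φ (u r) ∂(iidGaussian m d))
          / ENNReal.ofReal (Real.exp (4 * (m:ℝ) * R)) := markov
    _ ≤ ENNReal.ofReal (Real.exp (Real.exp 1 * R)) ^ m
          / ENNReal.ofReal (Real.exp (4 * (m:ℝ) * R)) := by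
        rw [htotal]
        exact ENNReal.div_le_div_right (pow_le_pow_left' hfactor m) _
    _ = ENNReal.ofReal (Real.exp ((m:ℝ) * (Real.exp 1 * R)))
          / ENNReal.ofReal (Real.exp (4 * (m:ℝ) * R)) := by
        rw [← ENNReal.ofReal_pow (Real.exp_pos _).le, ← Real.exp_nat_mul]
    _ = ENNReal.ofReal (Real.exp ((m:ℝ) * (Real.exp 1 * R)) / Real.exp (4 * (m:ℝ) * R)) :=
        (ENNReal.ofReal_div_of_pos (Real.exp_pos _)).symm
    _ = ENNReal.ofReal (Real.exp ((m:ℝ) * (Real.exp 1 * R) - 4 * (m:ℝ) * R)) := by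
        rw [Real.exp_sub]
    _ ≤ ENNReal.ofReal (Real.exp (-((m:ℝ) * R))) := by
        apply ENNReal.ofReal_le_ofReal
        apply Real.exp_le_exp.mpr
        nlinarith


end
end
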